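/- arXiv:2207.09495 — 3 statements merged into one kernel-verified Lean document; each statement's English description precedes it below -/
import Mathlib

section
/- Let G be a finite group, N a subgroup of G, and c ≥ 1 an integer. Then the number of c-tuples (x₁N, …, x_cN) of left cosets in G/N such that the intersection x₁Nx₁⁻¹ ∩ ⋯ ∩ x_cNx_c⁻¹ is a nontrivial subgroup is at most |G : N|^c multiplied by the sum, over all conjugacy classes C of G consisting of elements of prime order, of the rational numbers |C ∩ N|^c / |C|^(c-1). -/
/-!
A tuple `(xᵢN)` is counted iff some `g` of prime order lies in every `xᵢNxᵢ⁻¹`, which is the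
stabilizer of `xᵢN` for the action of `G` on `G/N`; so the count is at most `∑ |Fix g|^c` over
the elements `g` of prime order. Counting `{x | x⁻¹gx ∈ N}` once by cosets of `N` and once by
orbit–stabilizer for conjugation gives `|Fix g| = |G:N| |C ∩ N| / |C|`, `C` the class of `g`,
and grouping the sum by conjugacy classes gives the bound.
-/

open MulAction

lemma IsConj.orderOf_eq {G : Type*} [Group G] {a b : G} (h : IsConj a b) :
    orderOf a = orderOf b := by
  obtain ⟨c, hc⟩ := h
  exact hc.orderOf_eq (c : G)

lemma ConjClasses.setOf_orderOf_eq_preimage_mk {G : Type*} [Group G] (P : ℕ → Prop) :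
    {g : G | P (orderOf g)} = ConjClasses.mk ⁻¹' {C | ∀ g ∈ C.carrier, P (orderOf g)} := by
  ext g
  refine ⟨fun hg h hh => ?_, fun hg => hg g ConjClasses.mem_carrier_mk⟩
  rwa [(ConjClasses.mk_eq_mk_iff_isConj.mp (ConjClasses.mem_carrier_iff_mk_eq.mp hh)).orderOf_eq]

lemma ConjClasses.card_carrier_pos {G : Type*} [Monoid G] [Finite G] (C : ConjClasses G) :
    0 < Nat.card C.carrier := by
  obtain ⟨g, rfl⟩ := ConjClasses.mk_surjective C
  have : Nonempty (ConjClasses.mk g).carrier := ⟨⟨g, ConjClasses.mem_carrier_mk⟩⟩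
  exact Nat.card_pos

lemma Subgroup.exists_prime_orderOf_mem_of_ne_bot {G : Type*} [Group G] [Finite G]
    {H : Subgroup G} (hH : H ≠ ⊥) : ∃ g ∈ H, (orderOf g).Prime := by
  obtain ⟨p, hp, hdvd⟩ := Nat.exists_prime_and_dvd (mt Subgroup.card_eq_one.mp hH)
  have : Fact p.Prime := ⟨hp⟩
  obtain ⟨x, hx⟩ := exists_prime_orderOf_dvd_card' (G := H) p hdvd
  exact ⟨x, x.2, by rwa [Subgroup.orderOf_coe, hx]⟩

lemma QuotientGroup.map_conj_out_eq_stabilizer {G : Type*} [Group G] (N : Subgroup G)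
    (q : G ⧸ N) : N.map (MulAut.conj q.out).toMonoidHom = stabilizer G q := by
  have h := stabilizer_smul_eq_stabilizer_map_conj q.out ((1 : G) : G ⧸ N)
  rwa [stabilizer_quotient, MulAction.Quotient.smul_mk, smul_eq_mul, mul_one,
    QuotientGroup.out_eq', eq_comm] at h

lemma QuotientGroup.mk_mem_fixedBy_iff {G : Type*} [Group G] {N : Subgroup G} {g x : G} :
    (x : G ⧸ N) ∈ fixedBy (G ⧸ N) g ↔ x⁻¹ * g * x ∈ N := by
  rw [mem_fixedBy, MulAction.Quotient.smul_mk, smul_eq_mul, eq_comm, QuotientGroup.eq, mul_assoc]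

lemma MulAction.card_setOf_smul_mem {G X : Type*} [Group G] [MulAction G X] (b : X)
    (S : Set X) :
    Nat.card {a : G | a • b ∈ S} =
      Nat.card (stabilizer G b) * Nat.card (S ∩ orbit G b : Set X) := by
  have hrange : Set.range (ofQuotientStabilizer G b) = orbit G b := by
    ext x; simp [orbit, QuotientGroup.mk_surjective.exists]
  have hpre : {a : G | a • b ∈ S} =
      QuotientGroup.mk ⁻¹' (ofQuotientStabilizer G b ⁻¹' S) := rfl
  rw [hpre, Nat.card_congr (QuotientGroup.preimageMkEquivSubgroupProdSet _ _), Nat.card_prod,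
    ← Nat.card_image_of_injective (injective_ofQuotientStabilizer G b),
    Set.image_preimage_eq_inter_range, hrange]

lemma MulAction.card_setOf_iInf_stabilizer_ne_bot_le {G X ι : Type*} [Group G] [MulAction G X]
    [Finite G] [Finite X] [Finite ι] :
    Nat.card {t : ι → X | ⨅ i, stabilizer G (t i) ≠ ⊥} ≤
      ∑ᶠ g ∈ {g : G | (orderOf g).Prime}, Nat.card (fixedBy X g) ^ Nat.card ι := by
  have hsub : {t : ι → X | ⨅ i, stabilizer G (t i) ≠ ⊥} ⊆
      ⋃ g ∈ {g : G | (orderOf g).Prime}, Set.univ.pi fun _ => fixedBy X g := by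
    intro t ht
    obtain ⟨g, hg, hprime⟩ := Subgroup.exists_prime_orderOf_mem_of_ne_bot ht
    exact Set.mem_biUnion hprime fun i _ => Subgroup.mem_iInf.mp hg i
  calc Nat.card {t : ι → X | ⨅ i, stabilizer G (t i) ≠ ⊥}
      ≤ (⋃ g ∈ {g : G | (orderOf g).Prime}, Set.univ.pi fun _ => fixedBy X g).ncard := by
        rw [Nat.card_coe_set_eq]; exact Set.ncard_le_ncard hsub
    _ ≤ ∑ᶠ g ∈ {g : G | (orderOf g).Prime}, (Set.univ.pi fun (_ : ι) => fixedBy X g).ncard :=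
        (Set.toFinite _).ncard_biUnion_le _
    _ = _ := by
        refine finsum_mem_congr rfl fun g _ => ?_
        rw [← Nat.card_coe_set_eq, Nat.card_congr (Equiv.Set.univPi _), Nat.card_fun]

lemma finsum_mem_preimage_comp {α β M : Type*} [AddCommMonoid M] [Finite α] [Finite β]
    (φ : α → β) (s : Set β) (f : β → M) :
    ∑ᶠ a ∈ φ ⁻¹' s, f (φ a) = ∑ᶠ b ∈ s, Nat.card (φ ⁻¹' {b}) • f b := by
  have hunion : φ ⁻¹' s = ⋃ b ∈ s, φ ⁻¹' {b} := by ext; simp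
  rw [hunion, finsum_mem_biUnion (fun b _ b' _ h => Set.disjoint_singleton.mpr h |>.preimage φ)
    (Set.toFinite _) fun _ _ => Set.toFinite _]
  refine finsum_mem_congr rfl fun b _ => ?_
  have hconst : ∀ a ∈ φ ⁻¹' {b}, f (φ a) = f b := fun _ ha => congrArg f ha
  rw [finsum_mem_congr rfl hconst,
    finsum_mem_eq_finite_toFinset_sum _ (Set.toFinite _), Finset.sum_const,
    ← Set.ncard_eq_toFinset_card _, Nat.card_coe_set_eq]

lemma QuotientGroup.card_fixedBy_mul_card_carrier {G : Type*} [Group G] [Finite G]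
    (N : Subgroup G) (g : G) :
    Nat.card (fixedBy (G ⧸ N) g) * Nat.card (ConjClasses.mk g).carrier =
      N.index * Nat.card ((ConjClasses.mk g).carrier ∩ N : Set G) := by
  rw [← ConjAct.orbit_eq_carrier_conjClasses]
  have hcoset : Nat.card {x : G | x⁻¹ * g * x ∈ N} =
      Nat.card N * Nat.card (fixedBy (G ⧸ N) g) := by
    have : {x : G | x⁻¹ * g * x ∈ N} = QuotientGroup.mk ⁻¹' fixedBy (G ⧸ N) g := by
      ext x; exact QuotientGroup.mk_mem_fixedBy_iff.symm
    rw [this, Nat.card_congr (QuotientGroup.preimageMkEquivSubgroupProdSet _ _), Nat.card_prod]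
  have hconj : Nat.card {x : G | x⁻¹ * g * x ∈ N} =
      Nat.card (stabilizer (ConjAct G) g) * Nat.card (orbit (ConjAct G) g ∩ N : Set G) := by
    rw [Set.inter_comm, ← card_setOf_smul_mem]
    refine Nat.card_congr (Equiv.subtypeEquiv ((Equiv.inv G).trans ConjAct.toConjAct.toEquiv)
      fun x => ?_)
    simp [ConjAct.smul_def]
  have horbit : Nat.card (stabilizer (ConjAct G) g) * Nat.card (orbit (ConjAct G) g) =
      Nat.card G := by
    rw [Nat.card_coe_set_eq, ← index_stabilizer, mul_comm, Subgroup.index_mul_card]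
    rfl
  apply Nat.eq_of_mul_eq_mul_left (Nat.card_pos (α := N))
  calc Nat.card N * (Nat.card (fixedBy (G ⧸ N) g) * Nat.card (orbit (ConjAct G) g))
      = Nat.card {x : G | x⁻¹ * g * x ∈ N} * Nat.card (orbit (ConjAct G) g) := by
        rw [hcoset, mul_assoc]
    _ = Nat.card G * Nat.card (orbit (ConjAct G) g ∩ N : Set G) := by
        rw [hconj, ← horbit]; ring
    _ = Nat.card N * (N.index * Nat.card (orbit (ConjAct G) g ∩ N : Set G)) := by
        rw [← N.index_mul_card]; ring

lemma mul_div_pow_eq_pow_div_pow_pred {K : Type*} [Field K] {c : ℕ} (hc : 1 ≤ c) {x : K}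
    (hx : x ≠ 0) (a : K) : x * (a / x) ^ c = a ^ c / x ^ (c - 1) := by
  obtain ⟨n, rfl⟩ := Nat.exists_eq_add_of_le' hc
  rw [Nat.add_sub_cancel, div_pow, pow_succ]
  field_simp
  ring

/-- The number of `c`-tuples of cosets in `G/N` whose corresponding intersection of
conjugates of `N` is nontrivial is at most `|G:N|^c` times the sum, over the conjugacy
classes `C` of `G` of elements of prime order, of `|C ∩ N|^c / |C|^(c-1)`. -/
theorem stmt1 {G : Type*} [Group G] [Finite G] (N : Subgroup G) (c : ℕ) (hc : 1 ≤ c) :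
    (Nat.card {t : Fin c → G ⧸ N |
        (⨅ i, N.map (MulAut.conj ((t i).out)).toMonoidHom) ≠ ⊥} : ℚ) ≤
      (N.index : ℚ) ^ c *
        ∑ᶠ C ∈ {C : ConjClasses G | ∀ g ∈ C.carrier, (orderOf g).Prime},
          (Nat.card (C.carrier ∩ (N : Set G) : Set G) : ℚ) ^ c /
            (Nat.card C.carrier : ℚ) ^ (c - 1) := by
  set S := {C : ConjClasses G | ∀ g ∈ C.carrier, (orderOf g).Prime}
  have hcard_ne_zero (C : ConjClasses G) : (Nat.card C.carrier : ℚ) ≠ 0 :=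
    Nat.cast_ne_zero.mpr C.card_carrier_pos.ne'
  have hfix (g : G) : (Nat.card (fixedBy (G ⧸ N) g) : ℚ) =
      N.index * Nat.card ((ConjClasses.mk g).carrier ∩ N : Set G) /
        Nat.card (ConjClasses.mk g).carrier := by
    rw [eq_div_iff (hcard_ne_zero _)]
    exact_mod_cast QuotientGroup.card_fixedBy_mul_card_carrier N g
  simp_rw [QuotientGroup.map_conj_out_eq_stabilizer]
  calc _ ≤ ∑ᶠ g ∈ {g : G | (orderOf g).Prime}, (Nat.card (fixedBy (G ⧸ N) g) : ℚ) ^ c := by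
        have hle := card_setOf_iInf_stabilizer_ne_bot_le (G := G) (X := G ⧸ N) (ι := Fin c)
        rw [Nat.card_fin] at hle
        exact_mod_cast (Nat.cast_le.mpr hle).trans_eq (Nat.cast_finsum_mem (Set.toFinite _) _)
    _ = ∑ᶠ C ∈ S, Nat.card (ConjClasses.mk ⁻¹' {C}) •
          ((N.index : ℚ) * Nat.card (C.carrier ∩ N : Set G) / Nat.card C.carrier) ^ c := by
        simp_rw [ConjClasses.setOf_orderOf_eq_preimage_mk Nat.Prime, hfix]
        exact finsum_mem_preimage_comp ConjClasses.mk S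
          fun C => ((N.index : ℚ) * Nat.card (C.carrier ∩ N : Set G) / Nat.card C.carrier) ^ c
    _ = _ := by
        rw [mul_finsum_mem]
        refine finsum_mem_congr rfl fun C _ => ?_
        rw [← ConjClasses.carrier_eq_preimage_mk, nsmul_eq_mul,
          mul_div_pow_eq_pow_div_pow_pred hc (hcard_ne_zero C), mul_pow, mul_div_assoc]
end

section
/- Let F be a finite field of characteristic 2 with |F| = q ≥ 4, let G = SL₂(F), let T be a cyclic subgroup of G of order q − 1, and let N be the normaliser of T in G. Then there exists x ∈ G such that N ∩ N^x is the trivial subgroup. -/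
/-!
Conjugating in `SL₂(F)`, we may assume that `T` is generated by `diag(a, a⁻¹)`. Indeed, a generator
`M` of `T` satisfies `M ^ (q - 1) = 1`, so each eigenvalue `λ` of `M` over the algebraic closure
has `λ ^ q = λ` and lies in `F`; the eigenvalues `a, a⁻¹` are distinct, since otherwise `a = 1` in
characteristic `2`, the trace of `M` vanishes and `M ^ 2 = 1`.

The normaliser of the diagonal torus consists of the monomial matrices, the stabiliser of
`{0, ∞}` on the projective line. For `u = [[1, 1], [0, 1]]`, an element of `N ∩ N^u` also
stabilises `{1, ∞}`, so it fixes `0`, `1` and `∞` and is a scalar matrix, and in characteristic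
`2` the only scalar matrix of determinant `1` is `1`.
-/

/-- The conjugate subgroup `N^x = x⁻¹ N x`. -/
def conjSubgroup {G : Type*} [Group G] (N : Subgroup G) (x : G) : Subgroup G :=
  N.map (MulAut.conj x⁻¹).toMonoidHom

section conjSubgroup

variable {G : Type*} [Group G]

theorem mem_conjSubgroup {N : Subgroup G} {x g : G} :
    g ∈ conjSubgroup N x ↔ x * g * x⁻¹ ∈ N := by
  rw [conjSubgroup, Subgroup.mem_map_equiv]
  simp [MulAut.conj_apply]

theorem conjSubgroup_zpowers (g x : G) :
    conjSubgroup (Subgroup.zpowers g) x = Subgroup.zpowers (x⁻¹ * g * x) := by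
  simp [conjSubgroup, MonoidHom.map_zpowers]

theorem conjSubgroup_normalizer (H : Subgroup G) (x : G) :
    conjSubgroup (Subgroup.normalizer (H : Set G)) x =
      Subgroup.normalizer (conjSubgroup H x : Set G) :=
  Subgroup.map_equiv_normalizer_eq H _

theorem inf_conjSubgroup_eq_bot_of_conj {N : Subgroup G} {y u : G}
    (h : conjSubgroup N y ⊓ conjSubgroup (conjSubgroup N y) u = ⊥) :
    N ⊓ conjSubgroup N (y * u * y⁻¹) = ⊥ := by
  simp only [eq_bot_iff, SetLike.le_def, Subgroup.mem_inf, mem_conjSubgroup,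
    Subgroup.mem_bot] at h ⊢
  rintro g ⟨hgN, hgN'⟩
  exact conj_eq_one_iff.mp
    (h (x := y⁻¹ * g * y⁻¹⁻¹) ⟨by group; exact hgN, by group at hgN' ⊢; exact hgN'⟩)

end conjSubgroup

theorem FiniteField.mem_range_of_pow_card_eq_self {F K : Type*} [Field F] [Fintype F] [Field K]
    (i : F →+* K) {x : K} (hx : x ^ Fintype.card F = x) : x ∈ i.range := by
  have hq : 1 < Fintype.card F := Fintype.one_lt_card
  have hsplit : (Polynomial.X ^ Fintype.card F - Polynomial.X : Polynomial F).Splits := by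
    rw [Polynomial.splits_iff_card_roots, FiniteField.roots_X_pow_card_sub_X,
      FiniteField.X_pow_card_sub_X_natDegree_eq F hq]
    rfl
  exact hsplit.mem_range_of_isRoot (FiniteField.X_pow_card_sub_X_ne_zero F hq) (by simp [hx])

namespace Matrix

theorem exists_isRoot_charpoly_of_pow_card_sub_one_eq_one {F n : Type*} [Field F]
    [Fintype F] [Fintype n] [DecidableEq n] [Nonempty n] {M : Matrix n n F}
    (hM : M ^ (Fintype.card F - 1) = 1) : ∃ a : F, M.charpoly.IsRoot a := by
  let f := algebraMap F (AlgebraicClosure F)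
  obtain ⟨μ, hμ⟩ := Module.End.exists_eigenvalue (toLin' (f.mapMatrix M))
  obtain ⟨v, hv⟩ := hμ.exists_hasEigenvector
  have hμ_pow : μ ^ (Fintype.card F - 1) = 1 := by
    have := hv.pow_apply (Fintype.card F - 1)
    rw [← toLin'_pow, ← map_pow, hM, map_one, toLin'_one, LinearMap.id_apply] at this
    exact smul_left_injective _ hv.2 (this.symm.trans (one_smul _ v).symm)
  obtain ⟨a, rfl⟩ : μ ∈ f.range := by
    refine FiniteField.mem_range_of_pow_card_eq_self f ?_
    rw [← Nat.sub_add_cancel Fintype.card_pos, pow_succ, hμ_pow, one_mul]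
  rw [Module.End.hasEigenvalue_iff_isRoot_charpoly, charpoly_toLin', RingHom.mapMatrix_apply,
    charpoly_map, Polynomial.isRoot_map_iff f.injective] at hμ
  exact ⟨a, hμ⟩

theorem mul_transpose_eq_transpose_mul_diagonal {n R : Type*} [Fintype n] [DecidableEq n]
    [CommSemiring R] {M P : Matrix n n R} {d : n → R} (h : ∀ j, M *ᵥ P j = d j • P j) :
    M * Pᵀ = Pᵀ * diagonal d := by
  ext i j
  rw [mul_diagonal]
  simpa [mul_apply, mulVec, dotProduct, mul_comm] using congr_fun (h j) i

theorem exists_det_eq_one_mul_eq_mul_diagonal {F : Type*} [Field F]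
    {M : Matrix (Fin 2) (Fin 2) F} {v w : Fin 2 → F} {a b : F} (hv : M *ᵥ v = a • v)
    (hw : M *ᵥ w = b • w) (hvw : LinearIndependent F ![v, w]) :
    ∃ P : Matrix (Fin 2) (Fin 2) F, P.det = 1 ∧ M * P = P * diagonal ![a, b] := by
  have hdet : (of ![v, w]).det ≠ 0 :=
    ((linearIndependent_rows_iff_isUnit.mp hvw).map detMonoidHom).ne_zero
  set c := (of ![v, w]).det⁻¹
  refine ⟨(of ![c • v, w])ᵀ, ?_, mul_transpose_eq_transpose_mul_diagonal fun j ↦ ?_⟩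
  · have : (of ![c • v, w]).det = c * (of ![v, w]).det := by simp [det_fin_two]; ring
    rw [det_transpose, this, inv_mul_cancel₀ hdet]
  · fin_cases j
    · change M *ᵥ (c • v) = a • (c • v)
      rw [mulVec_smul, hv, smul_comm]
    · exact hw

end Matrix

namespace Matrix.SpecialLinearGroup

variable {F : Type*} [Field F]

def torus : Fˣ →* SpecialLinearGroup (Fin 2) F where
  toFun a := ⟨diagonal ![(a : F), (a : F)⁻¹], by simp⟩
  map_one' := by ext i j; fin_cases i <;> fin_cases j <;> simp
  map_mul' a b := by
    refine Subtype.ext ?_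
    change diagonal _ = diagonal _ * diagonal _
    rw [diagonal_mul_diagonal]
    congr 1
    ext i; fin_cases i <;> simp [mul_comm]

@[simp] theorem coe_torus (a : Fˣ) :
    (torus a : Matrix (Fin 2) (Fin 2) F) = diagonal ![(a : F), (a : F)⁻¹] := rfl

def IsMonomial (g : SpecialLinearGroup (Fin 2) F) : Prop :=
  (g 0 1 = 0 ∧ g 1 0 = 0) ∨ (g 0 0 = 0 ∧ g 1 1 = 0)

theorem det_coe_fin_two (g : SpecialLinearGroup (Fin 2) F) :
    g 0 0 * g 1 1 - g 0 1 * g 1 0 = 1 := by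
  rw [← det_fin_two]; exact g.det_coe

theorem isMonomial_of_mul_torus_eq {g : SpecialLinearGroup (Fin 2) F} {a b : Fˣ}
    (ha : (a : F) ≠ (a : F)⁻¹) (h : g * torus a = torus b * g) : IsMonomial g := by
  have hentry (i j : Fin 2) := congr_arg (fun k : SpecialLinearGroup (Fin 2) F => k i j) h
  simp only [coe_mul, coe_torus, mul_diagonal, diagonal_mul] at hentry
  have eq_zero {x c d : F} (hx : x * c = d * x) (hcd : c ≠ d) : x = 0 :=
    by_contra fun h0 ↦ hcd (mul_left_cancel₀ h0 (by rw [hx, mul_comm]))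
  have hg := det_coe_fin_two g
  by_cases hb : (b : F) = a
  · left
    exact ⟨eq_zero (hentry 0 1) (by simpa [hb] using ha.symm),
      eq_zero (hentry 1 0) (by simpa [hb] using ha)⟩
  · right
    have h00 : g 0 0 = 0 := eq_zero (hentry 0 0) (by simpa using Ne.symm hb)
    have hb' : (b : F) = (a : F)⁻¹ := by
      by_contra hb'
      have h01 : g 0 1 = 0 := eq_zero (hentry 0 1) (by simpa using Ne.symm hb')
      simp [h00, h01] at hg
    exact ⟨h00, eq_zero (hentry 1 1) (by simpa [hb'] using ha.symm)⟩

theorem isMonomial_of_mem_normalizer_zpowers_torus {a : Fˣ} (ha : (a : F) ≠ (a : F)⁻¹)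
    {g : SpecialLinearGroup (Fin 2) F}
    (hg : g ∈ Subgroup.normalizer
      (Subgroup.zpowers (torus a) : Set (SpecialLinearGroup (Fin 2) F))) :
    IsMonomial g := by
  obtain ⟨k, hk⟩ := Subgroup.mem_zpowers_iff.mp
    ((Subgroup.mem_normalizer_iff.mp hg _).mp (Subgroup.mem_zpowers _))
  refine isMonomial_of_mul_torus_eq (b := a ^ k) ha ?_
  rw [map_zpow, hk]
  group

def unipotent : SpecialLinearGroup (Fin 2) F := ⟨!![1, 1; 0, 1], by simp⟩

theorem coe_unipotent :
    ((unipotent : SpecialLinearGroup (Fin 2) F) : Matrix (Fin 2) (Fin 2) F) = !![1, 1; 0, 1] :=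
  rfl

theorem coe_unipotent_mul_mul_inv (g : SpecialLinearGroup (Fin 2) F) :
    ((unipotent * g * unipotent⁻¹ : SpecialLinearGroup (Fin 2) F) : Matrix (Fin 2) (Fin 2) F) =
      !![g 0 0 + g 1 0, g 0 1 + g 1 1 - g 0 0 - g 1 0; g 1 0, g 1 1 - g 1 0] := by
  rw [coe_mul, coe_mul, coe_inv, coe_unipotent, adjugate_fin_two_of]
  ext i j
  fin_cases i <;> fin_cases j <;> simp [mul_apply, vecMul, dotProduct, Fin.sum_univ_two] <;> ring

theorem eq_one_of_isMonomial_of_isMonomial_conj [CharP F 2] {g : SpecialLinearGroup (Fin 2) F}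
    (hg : IsMonomial g) (hug : IsMonomial (unipotent * g * unipotent⁻¹)) : g = 1 := by
  have hdet := det_coe_fin_two g
  have hentry (i j : Fin 2) := congr_fun₂ (coe_unipotent_mul_mul_inv g) i j
  simp only [IsMonomial, hentry, of_apply, cons_val', cons_val_zero, cons_val_one,
    empty_val', cons_val_fin_one] at hug
  rcases hg with ⟨h01, h10⟩ | ⟨h00, h11⟩
  · rcases hug with ⟨u01, -⟩ | ⟨u00, -⟩
    · have h11 : g 1 1 = g 0 0 := by linear_combination u01 - h01 + h10
      have h00 : g 0 0 = 1 := by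
        have hsq : g 0 0 * g 0 0 = 1 := by
          linear_combination hdet - g 0 0 * h11 + g 1 0 * h01
        simpa [CharTwo.neg_eq] using mul_self_eq_one_iff.mp hsq
      ext i j
      fin_cases i <;> fin_cases j <;> simp [h00, h01, h10, h11]
    · simp [h10, h01, show g 0 0 = 0 by simpa [h10] using u00] at hdet
  · have h10 : g 1 0 ≠ 0 := by rintro h; simp [h00, h] at hdet
    rcases hug with ⟨-, u10⟩ | ⟨u00, -⟩
    · exact absurd u10 h10
    · exact absurd (by simpa [h00] using u00) h10

theorem normalizer_zpowers_torus_inf_conjSubgroup_unipotent_eq_bot [CharP F 2] {a : Fˣ}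
    (ha : (a : F) ≠ (a : F)⁻¹) :
    Subgroup.normalizer (Subgroup.zpowers (torus a) : Set (SpecialLinearGroup (Fin 2) F)) ⊓
      conjSubgroup (Subgroup.normalizer (Subgroup.zpowers (torus a) : Set _)) unipotent = ⊥ := by
  rw [eq_bot_iff]
  rintro g ⟨hg, hug⟩
  exact eq_one_of_isMonomial_of_isMonomial_conj
    (isMonomial_of_mem_normalizer_zpowers_torus ha hg)
    (isMonomial_of_mem_normalizer_zpowers_torus ha (mem_conjSubgroup.mp hug))

theorem isRoot_charpoly_inv {M : SpecialLinearGroup (Fin 2) F} {a : F} (ha : a ≠ 0)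
    (hroot : (M : Matrix (Fin 2) (Fin 2) F).charpoly.IsRoot a) :
    (M : Matrix (Fin 2) (Fin 2) F).charpoly.IsRoot a⁻¹ := by
  simp only [charpoly_fin_two, det_coe, Polynomial.IsRoot, Polynomial.eval_add,
    Polynomial.eval_sub, Polynomial.eval_pow, Polynomial.eval_mul, Polynomial.eval_X,
    Polynomial.eval_C] at hroot ⊢
  field_simp
  linear_combination hroot

theorem exists_conj_eq_torus {M : SpecialLinearGroup (Fin 2) F} {a : Fˣ}
    (ha : (a : F) ≠ (a : F)⁻¹) (hroot : (M : Matrix (Fin 2) (Fin 2) F).charpoly.IsRoot a) :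
    ∃ Q : SpecialLinearGroup (Fin 2) F, Q⁻¹ * M * Q = torus a := by
  let f := Matrix.toLin' (M : Matrix (Fin 2) (Fin 2) F)
  have eigenvector {b : F} (hb : (M : Matrix (Fin 2) (Fin 2) F).charpoly.IsRoot b) :=
    ((Module.End.hasEigenvalue_iff_isRoot_charpoly f b).mpr
      (by rwa [charpoly_toLin'])).exists_hasEigenvector
  obtain ⟨v, hv⟩ := eigenvector hroot
  obtain ⟨w, hw⟩ := eigenvector (isRoot_charpoly_inv a.ne_zero hroot)
  have hindep : LinearIndependent F ![v, w] := by
    refine Module.End.eigenvectors_linearIndependent' f ![(a : F), (a : F)⁻¹] ?_ ![v, w] ?_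
    · intro i j hij
      fin_cases i <;> fin_cases j <;> simp_all [eq_comm]
    · intro i
      fin_cases i
      · exact hv
      · exact hw
  obtain ⟨P, hPdet, hMP⟩ := exists_det_eq_one_mul_eq_mul_diagonal
    (by simpa [f] using hv.apply_eq_smul) (by simpa [f] using hw.apply_eq_smul) hindep
  obtain ⟨Q, rfl⟩ : ∃ Q : SpecialLinearGroup (Fin 2) F, ↑Q = P := ⟨⟨P, hPdet⟩, rfl⟩
  refine ⟨Q, ?_⟩
  rw [mul_assoc, inv_mul_eq_iff_eq_mul]
  exact Subtype.ext hMP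

theorem sq_eq_one_of_trace_eq_zero [CharP F 2] {M : SpecialLinearGroup (Fin 2) F}
    (h : (M : Matrix (Fin 2) (Fin 2) F).trace = 0) : M ^ 2 = 1 := by
  have hCH := aeval_self_charpoly (M : Matrix (Fin 2) (Fin 2) F)
  simp only [charpoly_fin_two, h, map_zero, zero_mul, sub_zero, det_coe, map_one, map_add,
    map_pow, Polynomial.aeval_X] at hCH
  exact Subtype.ext (by simpa [CharTwo.add_eq_zero] using hCH)

theorem exists_conj_eq_torus_of_orderOf_eq [Fintype F] [CharP F 2] (hq : 4 ≤ Fintype.card F)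
    {M : SpecialLinearGroup (Fin 2) F} (hM : orderOf M = Fintype.card F - 1) :
    ∃ (Q : SpecialLinearGroup (Fin 2) F) (a : Fˣ),
      (a : F) ≠ (a : F)⁻¹ ∧ Q⁻¹ * M * Q = torus a := by
  have hpow : (M : Matrix (Fin 2) (Fin 2) F) ^ (Fintype.card F - 1) = 1 := by
    rw [← coe_pow, ← hM, pow_orderOf_eq_one, coe_one]
  obtain ⟨a, ha⟩ := exists_isRoot_charpoly_of_pow_card_sub_one_eq_one hpow
  have hcharpoly (b : F) : (M : Matrix (Fin 2) (Fin 2) F).charpoly.eval b =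
      b ^ 2 - (M : Matrix (Fin 2) (Fin 2) F).trace * b + 1 := by
    simp [charpoly_fin_two]
  have ha0 : a ≠ 0 := by
    rintro rfl
    simp [Polynomial.IsRoot, hcharpoly] at ha
  have ha1 : a ≠ a⁻¹ := by
    intro h
    have h1 : a = 1 := by
      have hsq : a * a = 1 := by rw [← mul_inv_cancel₀ ha0, ← h]
      simpa [CharTwo.neg_eq] using mul_self_eq_one_iff.mp hsq
    have htr : (M : Matrix (Fin 2) (Fin 2) F).trace = 0 := by
      have := ha.eq_zero
      rw [hcharpoly, h1] at this
      linear_combination -this + CharTwo.two_eq_zero (R := F)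
    have := orderOf_le_of_pow_eq_one two_pos (sq_eq_one_of_trace_eq_zero htr)
    omega
  obtain ⟨Q, hQ⟩ := exists_conj_eq_torus (a := Units.mk0 a ha0) ha1 ha
  exact ⟨Q, Units.mk0 a ha0, ha1, hQ⟩

end Matrix.SpecialLinearGroup

/-- Let `F` be a finite field of characteristic `2` with `|F| = q ≥ 4`, let
`G = SL₂(F)`, let `T ≤ G` be cyclic of order `q - 1` and let `N` be the normaliser of
`T` in `G`. Then `N ∩ N^x = 1` for some `x ∈ G`. -/
theorem stmt9 {F : Type*} [Field F] [Fintype F] [CharP F 2]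
    (hq : 4 ≤ Fintype.card F)
    (T : Subgroup (Matrix.SpecialLinearGroup (Fin 2) F))
    (hT : IsCyclic T) (hTcard : Nat.card T = Fintype.card F - 1) :
    ∃ x : Matrix.SpecialLinearGroup (Fin 2) F,
      Subgroup.normalizer (T : Set (Matrix.SpecialLinearGroup (Fin 2) F)) ⊓
        conjSubgroup (Subgroup.normalizer (T : Set (Matrix.SpecialLinearGroup (Fin 2) F))) x = ⊥ := by
  obtain ⟨M, rfl⟩ := T.isCyclic_iff_exists_zpowers_eq_top.mp hT
  obtain ⟨Q, a, ha, hQ⟩ :=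
    Matrix.SpecialLinearGroup.exists_conj_eq_torus_of_orderOf_eq hq (Nat.card_zpowers M ▸ hTcard)
  refine ⟨Q * Matrix.SpecialLinearGroup.unipotent * Q⁻¹, inf_conjSubgroup_eq_bot_of_conj ?_⟩
  rw [conjSubgroup_normalizer, conjSubgroup_zpowers, hQ]
  exact Matrix.SpecialLinearGroup.normalizer_zpowers_torus_inf_conjSubgroup_unipotent_eq_bot ha
end

section
/- Let n ≥ 3, let G = SLₙ(𝔽₂), and let N be the subgroup of G consisting of all permutation matrices (matrices having exactly one entry equal to 1 in each row and each column and all other entries 0). Then there exists x ∈ G such that N ∩ N^x is the trivial subgroup. -/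
theorem mem_conjSubgroup_iff {G : Type*} [Group G] {N : Subgroup G} {x g : G} :
    g ∈ conjSubgroup N x ↔ x * g * x⁻¹ ∈ N := by
  rw [conjSubgroup, Subgroup.mem_map_equiv]
  simp

open Matrix

section PermMatrix

variable {ι R : Type*} [DecidableEq ι] [Zero R] [One R]

theorem exists_perm_eq_toMatrix_of_existsUnique_one {A : Matrix ι ι R}
    (hrow : ∀ i, ∃! j, A i j = 1) (hcol : ∀ j, ∃! i, A i j = 1)
    (h01 : ∀ i j, A i j = 0 ∨ A i j = 1) :
    ∃ σ : Equiv.Perm ι, A = σ.toPEquiv.toMatrix := by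
  choose f hf hf_unique using hrow
  have hbij : Function.Bijective f := by
    refine ⟨fun i i' h => (hcol (f i)).unique (hf i) (h ▸ hf i'), fun j => ?_⟩
    obtain ⟨i, hi, -⟩ := hcol j
    exact ⟨i, (hf_unique i j hi).symm⟩
  refine ⟨Equiv.ofBijective f hbij, Matrix.ext fun i j => ?_⟩
  simp only [PEquiv.toMatrix_apply, Equiv.toPEquiv_apply, Option.mem_some_iff,
    Equiv.ofBijective_apply]
  split_ifs with hij
  · exact hij ▸ hf i
  · exact (h01 i j).resolve_right fun h => hij (hf_unique i j h).symm

end PermMatrix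

section UpperOnes

variable (R ι : Type*) [LinearOrder ι]

def upperOnes [Zero R] [One R] : Matrix ι ι R :=
  Matrix.of fun i j => if i ≤ j then 1 else 0

theorem det_upperOnes [CommRing R] [Fintype ι] : (upperOnes R ι).det = 1 := by
  rw [det_of_isUpperTriangular]
  · simp [upperOnes]
  · intro i j hij
    simp [upperOnes, not_le.2 (show j < i from hij)]

variable {R ι}

theorem Equiv.Perm.eq_one_of_monotone [Finite ι] {τ : Equiv.Perm ι} (hτ : Monotone τ) :
    τ = 1 := by
  have hiso := Subsingleton.elim
    ((hτ.strictMono_of_injective τ.injective).orderIsoOfSurjective τ τ.surjective)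
    (OrderIso.refl ι)
  exact Equiv.ext fun i => DFunLike.congr_fun hiso i

theorem perm_eq_one_of_upperOnes_mul_eq [Fintype ι] [NonAssocSemiring R] [Nontrivial R]
    {σ τ : Equiv.Perm ι}
    (h : upperOnes R ι * σ.toPEquiv.toMatrix = τ.toPEquiv.toMatrix * upperOnes R ι) :
    σ = 1 := by
  rw [PEquiv.mul_toMatrix_toPEquiv, PEquiv.toMatrix_toPEquiv_mul] at h
  have gc : GaloisConnection τ σ.symm := fun i j => by
    have hij := congr_fun₂ h i j
    simp only [submatrix_apply, id, upperOnes, of_apply] at hij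
    by_cases h₁ : τ i ≤ j <;> by_cases h₂ : i ≤ σ.symm j <;>
      simp only [h₁, h₂, ↓reduceIte] at hij ⊢
    exacts [(zero_ne_one hij).elim, (one_ne_zero hij).elim]
  have hτ : τ = 1 := Equiv.Perm.eq_one_of_monotone gc.monotone_l
  subst hτ
  exact inv_eq_one.1 <| Equiv.ext fun j => gc.u_unique GaloisConnection.id fun _ => rfl

end UpperOnes

theorem stmt19_general (n : ℕ)
    (N : Subgroup (Matrix.SpecialLinearGroup (Fin n) (ZMod 2)))
    (hN : ∀ A : Matrix.SpecialLinearGroup (Fin n) (ZMod 2),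
      A ∈ N ↔
        ((∀ i, ∃! j, (A : Matrix (Fin n) (Fin n) (ZMod 2)) i j = 1) ∧
          (∀ j, ∃! i, (A : Matrix (Fin n) (Fin n) (ZMod 2)) i j = 1) ∧
          (∀ i j, (A : Matrix (Fin n) (Fin n) (ZMod 2)) i j = 0 ∨
            (A : Matrix (Fin n) (Fin n) (ZMod 2)) i j = 1))) :
    ∃ x : Matrix.SpecialLinearGroup (Fin n) (ZMod 2),
      N ⊓ conjSubgroup N x = ⊥ := by
  let x : Matrix.SpecialLinearGroup (Fin n) (ZMod 2) := ⟨upperOnes _ _, det_upperOnes _ _⟩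
  refine ⟨x, (Subgroup.eq_bot_iff_forall _).2 fun A hA => ?_⟩
  obtain ⟨hA, hAx⟩ := Subgroup.mem_inf.1 hA
  rw [mem_conjSubgroup_iff] at hAx
  obtain ⟨hArow, hAcol, hA01⟩ := (hN A).1 hA
  obtain ⟨hBrow, hBcol, hB01⟩ := (hN _).1 hAx
  obtain ⟨σ, hσ⟩ := exists_perm_eq_toMatrix_of_existsUnique_one hArow hAcol hA01
  obtain ⟨τ, hτ⟩ := exists_perm_eq_toMatrix_of_existsUnique_one hBrow hBcol hB01
  have hcomm : upperOnes (ZMod 2) (Fin n) * σ.toPEquiv.toMatrix =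
      τ.toPEquiv.toMatrix * upperOnes (ZMod 2) (Fin n) := by
    have h := congr_arg
      ((↑) : Matrix.SpecialLinearGroup (Fin n) (ZMod 2) → Matrix (Fin n) (Fin n) (ZMod 2))
      (inv_mul_cancel_right (x * A) x)
    rwa [Matrix.SpecialLinearGroup.coe_mul (x * A * x⁻¹), Matrix.SpecialLinearGroup.coe_mul x A,
      hσ, hτ, eq_comm] at h
  apply Subtype.ext
  rw [hσ, perm_eq_one_of_upperOnes_mul_eq hcomm]
  simp

/-- Let `n ≥ 3`, let `G = SLₙ(𝔽₂)` and let `N ≤ G` be the subgroup of permutation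
matrices, i.e. the matrices with exactly one entry `1` in each row and each column and
all other entries `0`. Then `N ∩ N^x = 1` for some `x ∈ G`. -/
theorem stmt19 (n : ℕ) (hn : 3 ≤ n)
    (N : Subgroup (Matrix.SpecialLinearGroup (Fin n) (ZMod 2)))
    (hN : ∀ A : Matrix.SpecialLinearGroup (Fin n) (ZMod 2),
      A ∈ N ↔
        ((∀ i, ∃! j, (A : Matrix (Fin n) (Fin n) (ZMod 2)) i j = 1) ∧
          (∀ j, ∃! i, (A : Matrix (Fin n) (Fin n) (ZMod 2)) i j = 1) ∧
          (∀ i j, (A : Matrix (Fin n) (Fin n) (ZMod 2)) i j = 0 ∨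
            (A : Matrix (Fin n) (Fin n) (ZMod 2)) i j = 1))) :
    ∃ x : Matrix.SpecialLinearGroup (Fin n) (ZMod 2),
      N ⊓ conjSubgroup N x = ⊥ :=
  stmt19_general n N hN
end
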